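/- For every integer n >= 2, M(1,n) = n-1; that is, the maximum number of occurrences of s_1 in a reduced word of the longest permutation in S_n is exactly n-1. -/

import Mathlib

/-- The simple transposition `s_i = (i, i+1)` (1-indexed values) in `S_n`,
realized on `Fin n` (0-indexed positions `i-1` and `i`); junk value `1` otherwise. -/
def sgen (n i : ℕ) : Equiv.Perm (Fin n) :=
  if h : 0 < i ∧ i < n then Equiv.swap ⟨i - 1, by omega⟩ ⟨i, h.2⟩ else 1

/-- `l` is a reduced word for `w ∈ S_n`: its product is `w` and it has minimal length. -/
def IsReducedWordFor (n : ℕ) (l : List ℕ) (w : Equiv.Perm (Fin n)) : Prop :=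
  (l.map (sgen n)).prod = w ∧
    ∀ l' : List ℕ, (l'.map (sgen n)).prod = w → l.length ≤ l'.length

/-- The longest permutation `w_0 = n (n-1) ⋯ 2 1` of `S_n`. -/
def longestPerm (n : ℕ) : Equiv.Perm (Fin n) := Fin.revPerm

/-- `M(k,n)`: the maximum multiplicity of `s_k` among reduced words of `w_0 ∈ S_n`. -/
noncomputable def Mmax (k n : ℕ) : ℕ :=
  sSup {N | ∃ l : List ℕ, IsReducedWordFor n l (longestPerm n) ∧ l.count k = N}

/-- Two finite sets are weakly separated. -/
def WeaklySeparated (I J : Finset ℕ) : Prop :=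
  (∀ a ∈ I \ J, ∀ b ∈ J \ I, a < b) ∨ (∀ b ∈ J \ I, ∀ a ∈ I \ J, b < a)

/-- A monotone weakly separated path: pairwise weakly separated, and each step removes
one element `y` and adds one element `x > y`. -/
def IsMWSPath (P : List (Finset ℕ)) : Prop :=
  (∀ A ∈ P, ∀ B ∈ P, WeaklySeparated A B) ∧
    List.Chain' (fun A B => ∃ x y, y ∈ A ∧ x ∉ A ∧ y < x ∧ B = insert x (A.erase y)) P

/-! Right multiplication by an adjacent transposition changes the inversion number by at most
one, and raises it only when it swaps an increasing pair of values. Hence no word for a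
permutation is shorter than its inversion number, and in a word attaining it every letter raises
the inversion number; in particular each occurrence of `s₁` strictly increases the value at
position `0`. For `w₀` that value ends at `n - 1`, which bounds the count. Conversely the
staircase word `s₁ (s₂ s₁) (s₃ s₂ s₁) ⋯ (sₙ₋₁ ⋯ s₁)` has length `n choose 2`, the inversion number
of `w₀`, so it is reduced, and it contains `s₁` exactly `n - 1` times. -/

open Equiv Finset

section Inversions

variable {α : Type*} [LinearOrder α] [Fintype α]

def inversions (u : Perm α) : Finset (α × α) := {p | p.1 < p.2 ∧ u p.2 < u p.1}

def invCount (u : Perm α) : ℕ := #(inversions u)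

@[simp] lemma mem_inversions {u : Perm α} {p : α × α} :
    p ∈ inversions u ↔ p.1 < p.2 ∧ u p.2 < u p.1 := by
  simp [inversions]

omit [Fintype α] in
lemma swap_lt_swap_of_covBy {a b x y : α} (hab : a ⋖ b) (hxy : x < y) (hne : (x, y) ≠ (a, b)) :
    swap a b x < swap a b y := by
  have hle : ∀ c, c < b → c ≤ a := fun _ => hab.le_of_lt
  have hge : ∀ c, a < c → b ≤ c := fun _ => hab.ge_of_gt
  have := hab.lt
  simp only [swap_apply_def, ne_eq, Prod.mk.injEq] at hne ⊢
  split_ifs <;> grind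

lemma card_erase_inversions_mul_swap_le (u : Perm α) {a b : α} (hab : a ⋖ b) :
    #((inversions (u * swap a b)).erase (a, b)) ≤ invCount u := by
  refine card_le_card_of_injOn (Prod.map (swap a b) (swap a b)) (fun p hp => ?_)
    ((swap a b).injective.prodMap (swap a b).injective).injOn
  obtain ⟨⟨hlt, hinv⟩, hne⟩ : (p.1 < p.2 ∧ u (swap a b p.2) < u (swap a b p.1)) ∧ p ≠ (a, b) := by
    simpa using hp
  simpa [invCount] using ⟨swap_lt_swap_of_covBy hab hlt hne, hinv⟩

lemma invCount_mul_swap_le (u : Perm α) {a b : α} (hab : a ⋖ b) :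
    invCount (u * swap a b) ≤ invCount u + 1 := by
  have := card_erase_inversions_mul_swap_le u hab
  have := pred_card_le_card_erase (s := inversions (u * swap a b)) (a := (a, b))
  rw [invCount]
  omega

lemma lt_of_invCount_lt_invCount_mul_swap {u : Perm α} {a b : α} (hab : a ⋖ b)
    (h : invCount u < invCount (u * swap a b)) : u a < u b := by
  by_contra! hba
  have hab_not_inv : (a, b) ∉ inversions (u * swap a b) := by simpa using fun _ => hba
  have := card_erase_inversions_mul_swap_le u hab
  rw [erase_eq_of_notMem hab_not_inv] at this
  exact h.not_ge this

lemma invCount_one : invCount (1 : Perm α) = 0 :=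
  card_eq_zero.2 <| filter_eq_empty_iff.2 fun _ _ h => lt_asymm h.1 h.2

lemma invCount_of_strictAnti {u : Perm α} (hu : StrictAnti u) :
    invCount u = (Fintype.card α).choose 2 := by
  rw [invCount, ← Fintype.card_product_filter_lt]
  congr 1
  ext p
  simpa using fun h => hu h

end Inversions

section SimpleTranspositions

variable {n : ℕ}

def wordPerm (n : ℕ) (l : List ℕ) : Perm (Fin n) := (l.map (sgen n)).prod

@[simp] lemma wordPerm_nil : wordPerm n [] = 1 := rfl

@[simp] lemma wordPerm_cons (i : ℕ) (l : List ℕ) :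
    wordPerm n (i :: l) = sgen n i * wordPerm n l := by
  simp [wordPerm]

@[simp] lemma wordPerm_append (l l' : List ℕ) :
    wordPerm n (l ++ l') = wordPerm n l * wordPerm n l' := by
  simp [wordPerm]

lemma wordPerm_append_singleton (l : List ℕ) (i : ℕ) :
    wordPerm n (l ++ [i]) = wordPerm n l * sgen n i := by
  simp [wordPerm]

lemma sgen_eq_swap {i : ℕ} (hi : 0 < i) (hin : i < n) :
    sgen n i = swap ⟨i - 1, by omega⟩ ⟨i, hin⟩ :=
  dif_pos ⟨hi, hin⟩

lemma covBy_pred {i : ℕ} (hi : 0 < i) (hin : i < n) :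
    (⟨i - 1, by omega⟩ : Fin n) ⋖ ⟨i, hin⟩ :=
  ⟨Fin.mk_lt_mk.2 (by omega), fun _ h₁ h₂ => by simp only [Fin.lt_def] at h₁ h₂; omega⟩

lemma sgen_one (hn : 2 ≤ n) : sgen n 1 = swap ⟨0, by omega⟩ ⟨1, hn⟩ :=
  sgen_eq_swap one_pos hn

lemma invCount_mul_sgen_le (u : Perm (Fin n)) (i : ℕ) :
    invCount (u * sgen n i) ≤ invCount u + 1 := by
  by_cases hi : 0 < i ∧ i < n
  · rw [sgen_eq_swap hi.1 hi.2]
    exact invCount_mul_swap_le u (covBy_pred hi.1 hi.2)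
  · simp [sgen, hi]

lemma invCount_wordPerm_le_length (l : List ℕ) : invCount (wordPerm n l) ≤ l.length := by
  induction l using List.reverseRecOn with
  | nil => simp [invCount_one]
  | append_singleton l i ih =>
    rw [wordPerm_append_singleton, List.length_append, List.length_singleton]
    exact (invCount_mul_sgen_le (wordPerm n l) i).trans (by omega)

lemma sgen_apply_zero {i : ℕ} (hn : 0 < n) (hi : i ≠ 1) : sgen n i ⟨0, hn⟩ = ⟨0, hn⟩ := by
  unfold sgen
  split_ifs with h
  · exact swap_apply_of_ne_of_ne (Fin.ne_of_val_ne (by simp; omega))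
      (Fin.ne_of_val_ne (by simp; omega))
  · rfl

lemma count_one_le_wordPerm_apply_zero (hn : 2 ≤ n) (l : List ℕ)
    (hl : invCount (wordPerm n l) = l.length) :
    l.count 1 ≤ wordPerm n l ⟨0, by omega⟩ := by
  induction l using List.reverseRecOn with
  | nil => simp
  | append_singleton l i ih =>
    rw [wordPerm_append_singleton, List.length_append, List.length_singleton] at hl
    rw [wordPerm_append_singleton, List.count_append, Perm.mul_apply]
    have hu := invCount_wordPerm_le_length (n := n) l
    have hstep := invCount_mul_sgen_le (wordPerm n l) i
    have ih := ih (by omega)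
    generalize wordPerm n l = u at *
    by_cases hi : i = 1
    · subst hi
      rw [sgen_one hn] at hl ⊢
      have h01 : u ⟨0, _⟩ < u ⟨1, _⟩ :=
        lt_of_invCount_lt_invCount_mul_swap (covBy_pred one_pos hn) (by omega)
      rw [swap_apply_left, List.count_singleton_self]
      rw [Fin.lt_def] at h01
      omega
    · rw [sgen_apply_zero (by omega) hi, List.count_singleton, if_neg (by simpa using hi)]
      omega

end SimpleTranspositions

section LongestPerm

variable {n : ℕ}

def descWord : ℕ → List ℕ
  | 0 => []
  | m + 1 => (m + 1) :: descWord m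

def staircaseWord : ℕ → List ℕ
  | 0 => []
  | k + 1 => staircaseWord k ++ descWord (k + 1)

lemma count_one_descWord_succ (m : ℕ) : (descWord (m + 1)).count 1 = 1 := by
  induction m with
  | zero => rfl
  | succ m ih => rw [descWord, List.count_cons_of_ne (by omega), ih]

lemma count_one_staircaseWord (k : ℕ) : (staircaseWord k).count 1 = k := by
  induction k with
  | zero => rfl
  | succ k ih => rw [staircaseWord, List.count_append, ih, count_one_descWord_succ]

lemma length_descWord (m : ℕ) : (descWord m).length = m := by
  induction m with
  | zero => rfl
  | succ m ih => rw [descWord, List.length_cons, ih]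

lemma length_staircaseWord (k : ℕ) : (staircaseWord k).length = (k + 1).choose 2 := by
  induction k with
  | zero => rfl
  | succ k ih =>
    rw [staircaseWord, List.length_append, ih, length_descWord, Nat.choose_succ_succ' (k + 1),
      Nat.choose_one_right, add_comm]

lemma val_wordPerm_descWord {m : ℕ} (hm : m < n) (x : Fin n) :
    (wordPerm n (descWord m) x : ℕ) =
      if (x : ℕ) = 0 then m else if (x : ℕ) ≤ m then x - 1 else x := by
  induction m with
  | zero => simp only [descWord, wordPerm_nil, Perm.one_apply]; split_ifs <;> omega
  | succ m ih =>
    rw [descWord, wordPerm_cons, Perm.mul_apply, sgen_eq_swap m.succ_pos hm, swap_apply_def]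
    have := ih (by omega)
    split_ifs at * <;> simp_all [Fin.ext_iff] <;> omega

lemma val_wordPerm_staircaseWord {k : ℕ} (hk : k < n) (x : Fin n) :
    (wordPerm n (staircaseWord k) x : ℕ) = if (x : ℕ) ≤ k then k - x else x := by
  induction k generalizing x with
  | zero => simp only [staircaseWord, wordPerm_nil, Perm.one_apply]; split_ifs <;> omega
  | succ k ih =>
    rw [staircaseWord, wordPerm_append, Perm.mul_apply, ih (by omega),
      val_wordPerm_descWord hk]
    split_ifs <;> omega

lemma wordPerm_staircaseWord (hn : 0 < n) :
    wordPerm n (staircaseWord (n - 1)) = longestPerm n := by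
  ext x
  rw [val_wordPerm_staircaseWord (by omega), if_pos (by omega)]
  simp only [longestPerm, Fin.revPerm_apply, Fin.val_rev]
  omega

lemma invCount_longestPerm : invCount (longestPerm n) = n.choose 2 := by
  simpa using invCount_of_strictAnti (u := longestPerm n) Fin.rev_strictAnti

lemma isReducedWordFor_of_length_eq_invCount {l : List ℕ} {w : Perm (Fin n)}
    (h : wordPerm n l = w) (hl : l.length = invCount w) : IsReducedWordFor n l w :=
  ⟨h, fun l' h' => hl ▸ h' ▸ invCount_wordPerm_le_length l'⟩

lemma IsReducedWordFor.length_eq_invCount {l l₀ : List ℕ} {w : Perm (Fin n)}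
    (hl : IsReducedWordFor n l w) (h₀ : wordPerm n l₀ = w) (hl₀ : l₀.length = invCount w) :
    l.length = invCount w := by
  have := invCount_wordPerm_le_length (n := n) l
  rw [show wordPerm n l = w from hl.1] at this
  exact le_antisymm (hl₀ ▸ hl.2 l₀ h₀) this

lemma length_staircaseWord_eq_invCount_longestPerm (hn : 0 < n) :
    (staircaseWord (n - 1)).length = invCount (longestPerm n) := by
  rw [length_staircaseWord, invCount_longestPerm, Nat.sub_add_cancel hn]

lemma isGreatest_count_one (hn : 2 ≤ n) :
    IsGreatest {N | ∃ l, IsReducedWordFor n l (longestPerm n) ∧ l.count 1 = N} (n - 1) := by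
  have hprod₀ := wordPerm_staircaseWord (n := n) (by omega)
  have hlen₀ := length_staircaseWord_eq_invCount_longestPerm (n := n) (by omega)
  refine ⟨⟨_, isReducedWordFor_of_length_eq_invCount hprod₀ hlen₀, count_one_staircaseWord _⟩, ?_⟩
  rintro _ ⟨l, hl, rfl⟩
  have hprod : wordPerm n l = longestPerm n := hl.1
  have hcount := count_one_le_wordPerm_apply_zero hn l
    (by rw [hprod, hl.length_eq_invCount hprod₀ hlen₀])
  simpa [hprod, longestPerm] using hcount

end LongestPerm

theorem stmt7 (n : ℕ) (hn : 2 ≤ n) : Mmax 1 n = n - 1 :=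
  (isGreatest_count_one hn).csSup_eq
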